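/- arXiv:1311.4415 — 3 statements merged into one kernel-verified Lean document; each statement's English description precedes it below -/
import Mathlib

section
/- Let F satisfy hypothesis (F) with Lipschitz constant K and let H satisfy hypothesis (H). Let 𝒦 ⊂ ℝⁿ be compact, δ > 0, M = sup{‖v‖ : v ∈ F(x), x ∈ 𝒦 + δ𝔹ⁿ}, and δ₁ = δ/(M+1). Then for every x₀ ∈ 𝒦 and every v ∈ F(x₀) there exists a C¹ trajectory y of the differential inclusion ẏ(t) ∈ F(y(t)) with y(0) = x₀ such that ‖ẏ(t) − v‖ ≤ KMt for all t ∈ [0, δ₁]. -/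
open Set MeasureTheory Filter Topology Metric
open scoped ENNReal Pointwise

noncomputable section

/-- Euclidean space `ℝⁿ`. -/
abbrev En (n : ℕ) := EuclideanSpace ℝ (Fin n)

variable {n : ℕ}

/-- Hypothesis (F): `F` has nonempty, convex, compact values and is Lipschitz
continuous with constant `K`, i.e. `F(x₂) ⊆ F(x₁) + K‖x₁ − x₂‖ 𝔹ⁿ`. -/
def HypF (F : En n → Set (En n)) (K : ℝ) : Prop :=
  0 < K ∧
  (∀ x : En n, (F x).Nonempty ∧ Convex ℝ (F x) ∧ IsCompact (F x)) ∧
  (∀ x₁ x₂ : En n, ∀ v ∈ F x₂, ∃ v' ∈ F x₁, ‖v - v'‖ ≤ K * ‖x₁ - x₂‖)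

/-- The Hamiltonian `H(x,p) = sup_{v ∈ F(x)} ⟨p,v⟩`. -/
def Ham (F : En n → Set (En n)) (x p : En n) : ℝ :=
  sSup ((fun v => (inner ℝ p v : ℝ)) '' F x)

/-- Hypothesis (H): (H1) `x ↦ H(x,p)` is semiconvex with constant `c₀‖p‖`;
(H2) the gradient `∇ₚH(·,p)` exists for `p ≠ 0` (given by `gradp`) and is
Lipschitz in `x` with constant `K₁`, uniformly in `p ≠ 0`. -/
def HypH (F : En n → Set (En n)) (gradp : En n → En n → En n) (c₀ K₁ : ℝ) : Prop :=
  0 ≤ c₀ ∧ 0 ≤ K₁ ∧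
  (∀ p x₁ x₂ : En n,
    (Ham F x₁ p + Ham F x₂ p) / 2 - Ham F ((1 / 2 : ℝ) • (x₁ + x₂)) p ≥
      -(c₀ * ‖p‖ / 4) * ‖x₁ - x₂‖ ^ 2) ∧
  (∀ x p : En n, p ≠ 0 → HasGradientAt (fun q => Ham F x q) (gradp x p) p) ∧
  (∀ p : En n, p ≠ 0 → ∀ x y : En n, ‖gradp x p - gradp y p‖ ≤ K₁ * ‖x - y‖)

/-- `y` is absolutely continuous on `[a,b]` with a.e. derivative `v s` satisfying `P s (v s)`. -/
def IsACWith (y : ℝ → En n) (a b : ℝ) (P : ℝ → En n → Prop) : Prop :=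
  ∃ v : ℝ → En n,
    (∀ t ∈ Icc a b, IntervalIntegrable v MeasureTheory.volume a t) ∧
    (∀ᵐ s ∂MeasureTheory.volume, s ∈ Icc a b → P s (v s)) ∧
    (∀ t ∈ Icc a b, y t = y a + ∫ s in (a)..t, v s)

/-- `y` is a trajectory of the differential inclusion `ẏ ∈ F(y)` on `[a,b]`. -/
def IsTraj (F : En n → Set (En n)) (y : ℝ → En n) (a b : ℝ) : Prop :=
  IsACWith y a b (fun s v => v ∈ F (y s))

/-- The minimum time function (with value `∞` if the target is not reachable). -/
def minTime (F : En n → Set (En n)) (S : Set (En n)) (x : En n) : ℝ≥0∞ :=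
  sInf (ENNReal.ofReal ''
    {r : ℝ | 0 ≤ r ∧ ∃ y : ℝ → En n, IsTraj F y 0 r ∧ y 0 = x ∧ y r ∈ S})

/-- The proximal normal cone to `S` at `z`. -/
def proxNormal (S : Set (En n)) (z : En n) : Set (En n) :=
  {v | ∃ σ : ℝ, 0 ≤ σ ∧ ∀ y ∈ S, (inner ℝ v (y - z) : ℝ) ≤ σ * ‖y - z‖ ^ 2}

/-- Proximal supergradients of the (extended-real-valued) function `T` at `z`:
`ζ ∈ ∂ᴾT(z)` iff `(−ζ,1)` is a proximal normal to the hypograph of `T` at `(z, T z)`. -/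
def proxSuperGrad (T : En n → ℝ≥0∞) (z : En n) : Set (En n) :=
  {ζ | ∃ σ : ℝ, 0 ≤ σ ∧ ∀ y : En n, T y ≠ ⊤ → ∀ β : ℝ, ENNReal.ofReal β ≤ T y →
    (inner ℝ (-ζ) (y - z) : ℝ) + (β - (T z).toReal)
      ≤ σ * (‖y - z‖ ^ 2 + |β - (T z).toReal| ^ 2)}

/-- Horizontal proximal supergradients of `T` at `z`: `ζ ∈ ∂∞T(z)` iff `(−ζ,0)` is a
proximal normal to the hypograph of `T` at `(z, T z)`. -/
def horizSuperGrad (T : En n → ℝ≥0∞) (z : En n) : Set (En n) :=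
  {ζ | ∃ σ : ℝ, 0 ≤ σ ∧ ∀ y : En n, T y ≠ ⊤ → ∀ β : ℝ, ENNReal.ofReal β ≤ T y →
    (inner ℝ (-ζ) (y - z) : ℝ) ≤ σ * (‖y - z‖ ^ 2 + |β - (T z).toReal| ^ 2)}

/-- The Clarke generalized gradient of `f` at `x`. -/
def clarkeGradAt (f : En n → ℝ) (x : En n) : Set (En n) :=
  convexHull ℝ {v | ∃ y : ℕ → En n, ∃ g : ℕ → En n,
    Filter.Tendsto y Filter.atTop (nhds x) ∧
    (∀ i, HasGradientAt f (g i) (y i)) ∧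
    Filter.Tendsto g Filter.atTop (nhds v)}

/-- `xtraj` is an optimal trajectory from `x` reaching the target `S` in time `Tx = T(x)`. -/
def OptimalTraj (F : En n → Set (En n)) (S : Set (En n)) (x : En n)
    (xtraj : ℝ → En n) (Tx : ℝ) : Prop :=
  0 ≤ Tx ∧ IsTraj F xtraj 0 Tx ∧ xtraj 0 = x ∧ xtraj Tx ∈ S ∧
    minTime F S x = ENNReal.ofReal Tx

end

/-!
Let `f x` be the projection of `v` onto `F x`. As `F` is Lipschitz, `‖f x - v‖ ≤ K ‖x - x₀‖`,
and comparing the variational inequalities of two projections shows that `f` is locally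
`1/2`-Hölder, in particular continuous. Peano's theorem (Euler polygons, Arzelà–Ascoli, and
dominated convergence in the integral equation) gives a `C¹` solution of `ẏ = f y`, `y 0 = x₀`,
which stays in the ball of radius `M t` about `x₀` because `‖f‖ ≤ M` there. Hence
`‖ẏ t - v‖ ≤ K ‖y t - x₀‖ ≤ K M t`.
-/

open scoped RealInnerProductSpace

section Projection

variable {E : Type*} [NormedAddCommGroup E] [InnerProductSpace ℝ E]

theorem exists_mem_forall_norm_sub_le_and_inner_nonpos {C : Set E} (hne : C.Nonempty)
    (hC : IsComplete C) (hconv : Convex ℝ C) (v : E) :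
    ∃ p ∈ C, (∀ w ∈ C, ‖v - p‖ ≤ ‖v - w‖) ∧ ∀ w ∈ C, ⟪v - p, w - p⟫ ≤ 0 := by
  obtain ⟨p, hp, hmin⟩ := exists_norm_eq_iInf_of_complete_convex hne hC hconv v
  refine ⟨p, hp, fun w hw => ?_, (norm_eq_iInf_iff_real_inner_le_zero hconv hp).1 hmin⟩
  rw [hmin]
  exact ciInf_le ⟨0, forall_mem_range.2 fun _ => norm_nonneg _⟩ (⟨w, hw⟩ : C)

/-- If `a` and `b` satisfy the variational inequalities of the projections of `v` onto two
convex sets, each lying within `d` of the other set, then `‖a - b‖ = O(√d)`. -/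
theorem sq_norm_sub_le_of_inner_nonpos {v a b a' b' : E} {d : ℝ}
    (ha : ⟪v - a, b' - a⟫ ≤ 0) (hb : ⟪v - b, a' - b⟫ ≤ 0)
    (hbb' : ‖b - b'‖ ≤ d) (haa' : ‖a - a'‖ ≤ d) :
    ‖a - b‖ ^ 2 ≤ (‖v - a‖ + ‖v - b‖) * d := by
  have hsplit : ‖a - b‖ ^ 2 =
      ⟪v - a, b' - a⟫ + ⟪v - a, b - b'⟫ + ⟪v - b, a' - b⟫ + ⟪v - b, a - a'⟫ := by
    rw [← real_inner_self_eq_norm_sq]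
    simp only [inner_sub_left, inner_sub_right, real_inner_comm]
    ring
  rw [hsplit]
  nlinarith [real_inner_le_norm (v - a) (b - b'), real_inner_le_norm (v - b) (a - a'),
    mul_le_mul_of_nonneg_left hbb' (norm_nonneg (v - a)),
    mul_le_mul_of_nonneg_left haa' (norm_nonneg (v - b))]

/-- Projecting a fixed `v ∈ F x₀` onto the values of a Lipschitz set-valued map gives a
continuous (in fact locally `1/2`-Hölder) selection. -/
theorem exists_continuous_selection_norm_sub_le {X : Type*} [SeminormedAddCommGroup X]
    {F : X → Set E} {K : ℝ} (hne : ∀ x, (F x).Nonempty) (hcomplete : ∀ x, IsComplete (F x))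
    (hconv : ∀ x, Convex ℝ (F x))
    (hlip : ∀ x₁ x₂, ∀ w ∈ F x₂, ∃ w' ∈ F x₁, ‖w - w'‖ ≤ K * ‖x₁ - x₂‖)
    {x₀ : X} {v : E} (hv : v ∈ F x₀) :
    ∃ f : X → E, Continuous f ∧ (∀ x, f x ∈ F x) ∧ ∀ x, ‖f x - v‖ ≤ K * ‖x - x₀‖ := by
  choose f hfF hfmin hfvar using fun x =>
    exists_mem_forall_norm_sub_le_and_inner_nonpos (hne x) (hcomplete x) (hconv x) v
  have hfv : ∀ x, ‖f x - v‖ ≤ K * ‖x - x₀‖ := fun x => by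
    obtain ⟨w, hw, hvw⟩ := hlip x x₀ v hv
    rw [norm_sub_rev]
    exact (hfmin x w hw).trans hvw
  have hsq : ∀ x y, ‖f x - f y‖ ^ 2 ≤ K * (‖x - x₀‖ + ‖y - x₀‖) * (K * ‖x - y‖) := by
    intro x y
    obtain ⟨b', hb', hbb'⟩ := hlip x y (f y) (hfF y)
    obtain ⟨a', ha', haa'⟩ := hlip y x (f x) (hfF x)
    rw [norm_sub_rev y x] at haa'
    have hd : 0 ≤ K * ‖x - y‖ := (norm_nonneg _).trans hbb'
    calc ‖f x - f y‖ ^ 2 ≤ (‖v - f x‖ + ‖v - f y‖) * (K * ‖x - y‖) :=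
          sq_norm_sub_le_of_inner_nonpos (hfvar x b' hb') (hfvar y a' ha') hbb' haa'
      _ ≤ K * (‖x - x₀‖ + ‖y - x₀‖) * (K * ‖x - y‖) := by
          rw [norm_sub_rev v, norm_sub_rev v]
          gcongr
          linarith [hfv x, hfv y]
  refine ⟨f, continuous_iff_continuousAt.2 fun y => ?_, hfF, hfv⟩
  rw [ContinuousAt, tendsto_iff_norm_sub_tendsto_zero]
  have hbound : Tendsto (fun x => √(K * (‖x - x₀‖ + ‖y - x₀‖) * (K * ‖x - y‖))) (𝓝 y) (𝓝 0) := by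
    have hc : Continuous fun x => √(K * (‖x - x₀‖ + ‖y - x₀‖) * (K * ‖x - y‖)) := by fun_prop
    simpa using hc.tendsto y
  exact squeeze_zero (fun _ => norm_nonneg _) (fun x => Real.le_sqrt_of_sq_le (hsq x y)) hbound

end Projection

theorem Bornology.IsBounded.biUnion_of_lipschitz {X E : Type*} [SeminormedAddCommGroup X]
    [SeminormedAddCommGroup E] {F : X → Set E} {K : ℝ} {x₁ : X}
    (hx₁ : Bornology.IsBounded (F x₁))
    (hlip : ∀ x₁ x₂, ∀ w ∈ F x₂, ∃ w' ∈ F x₁, ‖w - w'‖ ≤ K * ‖x₁ - x₂‖)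
    {S : Set X} (hS : Bornology.IsBounded S) : Bornology.IsBounded (⋃ x ∈ S, F x) := by
  obtain ⟨C₀, hC₀⟩ := isBounded_iff_forall_norm_le.1 hx₁
  obtain ⟨C, hC⟩ := isBounded_iff_forall_norm_le.1 hS
  refine isBounded_iff_forall_norm_le.2 ⟨C₀ + |K| * (‖x₁‖ + C), fun w hw => ?_⟩
  obtain ⟨x, hx, hw⟩ := mem_iUnion₂.1 hw
  obtain ⟨w', hw', hww'⟩ := hlip x₁ x w hw
  have hdist : K * ‖x₁ - x‖ ≤ |K| * (‖x₁‖ + C) :=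
    mul_le_mul (le_abs_self K) (norm_sub_le_of_le le_rfl (hC x hx)) (norm_nonneg _) (abs_nonneg K)
  calc ‖w‖ ≤ ‖w'‖ + ‖w - w'‖ := norm_le_norm_add_norm_sub' w w'
    _ ≤ C₀ + |K| * (‖x₁‖ + C) := add_le_add (hC₀ w' hw') (hww'.trans hdist)

theorem exists_continuous_retraction_closedBall {E : Type*} [NormedAddCommGroup E]
    [NormedSpace ℝ E] (x₀ : E) {r : ℝ} (hr : 0 ≤ r) :
    ∃ ρ : E → E, Continuous ρ ∧ (∀ x, ρ x ∈ closedBall x₀ r) ∧ ∀ x ∈ closedBall x₀ r, ρ x = x := by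
  rcases hr.eq_or_lt with rfl | hr
  · exact ⟨fun _ => x₀, continuous_const, fun _ => mem_closedBall_self le_rfl,
      fun x hx => (dist_le_zero.1 hx).symm⟩
  have hmax : ∀ x : E, max r ‖x - x₀‖ ≠ 0 := fun x => (hr.trans_le (le_max_left _ _)).ne'
  refine ⟨fun x => x₀ + (r / max r ‖x - x₀‖) • (x - x₀), ?_, fun x => ?_, fun x hx => ?_⟩
  · exact continuous_const.add ((continuous_const.div (by fun_prop) hmax).smul (by fun_prop))
  · rw [mem_closedBall_iff_norm, add_sub_cancel_left, norm_smul, Real.norm_eq_abs,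
      abs_of_nonneg (by positivity), div_mul_eq_mul_div, div_le_iff₀ (by positivity)]
    exact mul_le_mul_of_nonneg_left (le_max_right _ _) hr.le
  · simp only [max_eq_left (mem_closedBall_iff_norm.1 hx), div_self hr.ne', one_smul,
      add_sub_cancel]

namespace Euler

variable {E : Type*} [NormedAddCommGroup E] [NormedSpace ℝ E]

def node (g : E → E) (x₀ : E) (h : ℝ) (i : ℕ) : E := (fun x => x + h • g x)^[i] x₀

noncomputable def slope (g : E → E) (x₀ : E) (h : ℝ) (s : ℝ) : E := g (node g x₀ h ⌊s / h⌋₊)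

/-- The Euler polygon with step `h`, written as the integral of its piecewise constant slope. -/
noncomputable def polygon (g : E → E) (x₀ : E) (h : ℝ) (t : ℝ) : E :=
  x₀ + ∫ s in (0 : ℝ)..t, slope g x₀ h s

variable {g : E → E} {x₀ : E} {h M : ℝ}

theorem node_succ (i : ℕ) : node g x₀ h (i + 1) = node g x₀ h i + h • g (node g x₀ h i) :=
  Function.iterate_succ_apply' _ _ _

theorem stronglyMeasurable_slope : StronglyMeasurable (slope g x₀ h) :=
  (StronglyMeasurable.of_discrete (f := fun i : ℕ => g (node g x₀ h i))).comp_measurable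
    (measurable_id.div_const h).nat_floor

theorem slope_eq_of_mem_Ico (hh : 0 < h) {i : ℕ} {s : ℝ} (hs : s ∈ Ico (i * h) ((i + 1) * h)) :
    slope g x₀ h s = g (node g x₀ h i) := by
  have hfloor : ⌊s / h⌋₊ = i := by
    rw [Nat.floor_eq_iff (div_nonneg ((by positivity : (0 : ℝ) ≤ i * h).trans hs.1) hh.le),
      le_div_iff₀ hh, div_lt_iff₀ hh]
    exact hs
  rw [slope, hfloor]

variable (hg : ∀ x, ‖g x‖ ≤ M)
include hg

theorem intervalIntegrable_slope (a b : ℝ) : IntervalIntegrable (slope g x₀ h) volume a b :=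
  (intervalIntegrable_const (c := M)).mono_fun' stronglyMeasurable_slope.aestronglyMeasurable
    (ae_of_all _ fun _ => hg _)

theorem polygon_sub_polygon (s t : ℝ) :
    polygon g x₀ h t - polygon g x₀ h s = ∫ r in s..t, slope g x₀ h r := by
  rw [polygon, polygon, add_sub_add_left_eq_sub,
    intervalIntegral.integral_interval_sub_left (intervalIntegrable_slope hg _ _)
      (intervalIntegrable_slope hg _ _)]

theorem norm_polygon_sub_polygon_le (s t : ℝ) :
    ‖polygon g x₀ h t - polygon g x₀ h s‖ ≤ M * |t - s| := by
  rw [polygon_sub_polygon hg]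
  exact intervalIntegral.norm_integral_le_of_norm_le_const fun r _ =>
    (hg _ : ‖slope g x₀ h r‖ ≤ M)

theorem lipschitzWith_polygon : LipschitzWith M.toNNReal (polygon g x₀ h) :=
  LipschitzWith.of_dist_le' fun t s => by
    simpa only [dist_eq_norm, Real.norm_eq_abs] using norm_polygon_sub_polygon_le hg s t

variable [CompleteSpace E]

theorem polygon_natCast_mul (hh : 0 < h) (i : ℕ) : polygon g x₀ h (i * h) = node g x₀ h i := by
  induction i with
  | zero => simp [polygon, node]
  | succ i ih =>
    have hstep : ∫ r in (i * h)..((i + 1) * h), slope g x₀ h r = h • g (node g x₀ h i) := by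
      rw [intervalIntegral.integral_of_le (by gcongr; linarith), integral_Ioc_eq_integral_Ioo,
        ← integral_Ico_eq_integral_Ioo, setIntegral_congr_fun measurableSet_Ico
          fun s hs => slope_eq_of_mem_Ico hh hs, setIntegral_const, Real.volume_real_Ico,
        show ((i : ℝ) + 1) * h - i * h = h by ring, max_eq_left hh.le]
    rw [node_succ, ← hstep, ← ih, ← polygon_sub_polygon hg]
    push_cast
    abel

theorem norm_polygon_sub_node_le (hh : 0 < h) {s : ℝ} (hs : 0 ≤ s) :
    ‖polygon g x₀ h s - node g x₀ h ⌊s / h⌋₊‖ ≤ M * h := by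
  have hlow : (⌊s / h⌋₊ : ℝ) * h ≤ s := (le_div_iff₀ hh).1 (Nat.floor_le (by positivity))
  have hup : s < (⌊s / h⌋₊ + 1) * h := (div_lt_iff₀ hh).1 (Nat.lt_floor_add_one _)
  rw [← polygon_natCast_mul hg hh]
  calc ‖polygon g x₀ h s - polygon g x₀ h (⌊s / h⌋₊ * h)‖
      ≤ M * |s - ⌊s / h⌋₊ * h| := norm_polygon_sub_polygon_le hg _ _
    _ ≤ M * h := by
      have hM : 0 ≤ M := (norm_nonneg _).trans (hg 0)
      gcongr
      rw [abs_of_nonneg (by linarith)]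
      linarith

end Euler

theorem exists_subseq_tendsto_of_lipschitzWith {E : Type*} [MetricSpace E] [ProperSpace E]
    {Y : ℕ → ℝ → E} {x₀ : E} {L : NNReal} {T : ℝ} (hT : 0 ≤ T) (hY0 : ∀ k, Y k 0 = x₀)
    (hY : ∀ k, LipschitzWith L (Y k)) :
    ∃ y : ℝ → E, Continuous y ∧ ∃ φ : ℕ → ℕ, StrictMono φ ∧
      ∀ t ∈ Icc 0 T, Tendsto (fun j => Y (φ j) t) atTop (𝓝 (y t)) := by
  have : CompactSpace (Icc 0 T) := isCompact_iff_compactSpace.1 isCompact_Icc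
  let G : ℕ → BoundedContinuousFunction (Icc 0 T) E := fun k =>
    .mkOfCompact ⟨fun t => Y k t, (hY k).continuous.comp continuous_subtype_val⟩
  have hG : ∀ k, LipschitzWith L (G k) := fun k => by
    have h := (hY k).comp (LipschitzWith.subtype_val (Icc 0 T))
    rw [mul_one] at h
    exact h
  have hcompact : IsCompact (closure (range G)) := by
    refine BoundedContinuousFunction.arzela_ascoli (closedBall x₀ (L * T))
      (isCompact_closedBall _ _) _ (fun _ t ⟨k, hk⟩ => ?_) ?_
    · subst hk
      rw [mem_closedBall, ← hY0 k]
      calc dist (Y k t) (Y k 0) ≤ L * dist (t : ℝ) 0 := (hY k).dist_le_mul _ _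
        _ ≤ L * T := by
          gcongr
          rw [Real.dist_eq, sub_zero, abs_of_nonneg t.2.1]
          exact t.2.2
    · refine (LipschitzWith.uniformEquicontinuous _ L fun ⟨_, k, hk⟩ => ?_).equicontinuous
      subst hk
      exact hG k
  obtain ⟨ψ, -, φ, hφ, hlim⟩ := hcompact.tendsto_subseq fun k => subset_closure (mem_range_self k)
  refine ⟨IccExtend hT ψ, ψ.continuous.Icc_extend', φ, hφ, fun t ht => ?_⟩
  rw [IccExtend_of_mem hT ψ ht]
  exact ((continuous_eval_const ⟨t, ht⟩).tendsto ψ).comp hlim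

section Peano

variable {E : Type*} [NormedAddCommGroup E] [NormedSpace ℝ E] [ProperSpace E]

theorem exists_forall_hasDerivWithinAt_Icc_of_continuous {g : E → E} {M : ℝ} (hg : Continuous g)
    (hgM : ∀ x, ‖g x‖ ≤ M) (x₀ : E) {T : ℝ} (hT : 0 ≤ T) :
    ∃ y : ℝ → E, y 0 = x₀ ∧ ∀ t ∈ Icc 0 T, HasDerivWithinAt y (g (y t)) (Icc 0 T) t := by
  set h : ℕ → ℝ := fun k => 1 / (k + 1)
  have hh : ∀ k, 0 < h k := fun k => Nat.one_div_pos_of_nat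
  obtain ⟨y, hy, φ, hφ, hlim⟩ := exists_subseq_tendsto_of_lipschitzWith (x₀ := x₀) hT
    (fun k => by simp [Euler.polygon])
    fun k => Euler.lipschitzWith_polygon (x₀ := x₀) (h := h k) hgM
  have hslope : ∀ s ∈ Icc 0 T,
      Tendsto (fun j => Euler.slope g x₀ (h (φ j)) s) atTop (𝓝 (g (y s))) := by
    intro s hs
    refine (hg.tendsto _).comp ?_
    have hnode : Tendsto (fun j => Euler.node g x₀ (h (φ j)) ⌊s / h (φ j)⌋₊ -
        Euler.polygon g x₀ (h (φ j)) s) atTop (𝓝 0) := by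
      have hstep : Tendsto (fun j => M * h (φ j)) atTop (𝓝 0) := by
        simpa [h] using (tendsto_one_div_add_atTop_nhds_zero_nat.comp hφ.tendsto_atTop).const_mul M
      refine squeeze_zero_norm (fun j => ?_) hstep
      rw [norm_sub_rev]
      exact Euler.norm_polygon_sub_node_le hgM (hh _) hs.1
    simpa using hnode.add (hlim s hs)
  have hint : ∀ t ∈ Icc 0 T, y t = x₀ + ∫ s in (0 : ℝ)..t, g (y s) := by
    intro t ht
    refine tendsto_nhds_unique (hlim t ht) (tendsto_const_nhds.add ?_)
    refine intervalIntegral.tendsto_integral_filter_of_dominated_convergence (fun _ => M)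
      (Eventually.of_forall fun _ => Euler.stronglyMeasurable_slope.aestronglyMeasurable)
      (Eventually.of_forall fun _ => ae_of_all _ fun _ _ => hgM _) intervalIntegrable_const
      (ae_of_all _ fun s hs => hslope s ?_)
    rw [uIoc_of_le ht.1] at hs
    exact ⟨hs.1.le, hs.2.trans ht.2⟩
  refine ⟨y, by simpa using hint 0 ⟨le_rfl, hT⟩, fun t ht => ?_⟩
  exact (((hg.comp hy).integral_hasStrictDerivAt 0 t).hasDerivAt.hasDerivWithinAt.const_add
    x₀).congr (fun s hs => hint s hs) (hint t ht)

theorem exists_forall_hasDerivWithinAt_Icc_of_continuousOn {f : E → E} {x₀ : E} {M T : ℝ}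
    (hM : 0 ≤ M) (hT : 0 ≤ T) (hf : ContinuousOn f (closedBall x₀ (M * T)))
    (hfM : ∀ x ∈ closedBall x₀ (M * T), ‖f x‖ ≤ M) :
    ∃ y : ℝ → E, y 0 = x₀ ∧ ∀ t ∈ Icc 0 T,
      y t ∈ closedBall x₀ (M * t) ∧ HasDerivWithinAt y (f (y t)) (Icc 0 T) t := by
  obtain ⟨ρ, hρ, hρmem, hρeq⟩ := exists_continuous_retraction_closedBall x₀ (mul_nonneg hM hT)
  obtain ⟨y, hy0, hy⟩ := exists_forall_hasDerivWithinAt_Icc_of_continuous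
    (hf.comp_continuous hρ hρmem) (fun x => hfM _ (hρmem x)) x₀ hT
  have hball : ∀ t ∈ Icc 0 T, y t ∈ closedBall x₀ (M * t) := fun t ht => by
    simpa [hy0, ← dist_eq_norm] using
      norm_image_sub_le_of_norm_deriv_le_segment' hy (fun s _ => hfM _ (hρmem _)) t ht
  refine ⟨y, hy0, fun t ht => ⟨hball t ht, ?_⟩⟩
  have hyt : y t ∈ closedBall x₀ (M * T) :=
    closedBall_subset_closedBall (mul_le_mul_of_nonneg_left ht.2 hM) (hball t ht)
  simpa only [Function.comp_apply, hρeq _ hyt] using hy t ht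

end Peano

theorem smooth_trajectory_approx_general {n : ℕ} (F : En n → Set (En n)) (K : ℝ)
    (hF : HypF F K)
    (𝒦 : Set (En n)) (h𝒦 : IsCompact 𝒦) (δ M δ₁ : ℝ) (hδ : 0 < δ)
    (hM : M = sSup {r : ℝ | ∃ x ∈ 𝒦 + Metric.ball (0 : En n) δ, ∃ w ∈ F x, r = ‖w‖})
    (hδ₁ : δ₁ = δ / (M + 1)) :
    ∀ x₀ ∈ 𝒦, ∀ v ∈ F x₀, ∃ y y' : ℝ → En n,
      y 0 = x₀ ∧
      (∀ t ∈ Icc (0 : ℝ) δ₁, HasDerivWithinAt y (y' t) (Icc (0 : ℝ) δ₁) t) ∧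
      ContinuousOn y' (Icc (0 : ℝ) δ₁) ∧
      (∀ t ∈ Icc (0 : ℝ) δ₁, y' t ∈ F (y t)) ∧
      (∀ t ∈ Icc (0 : ℝ) δ₁, ‖y' t - v‖ ≤ K * M * t) := by
  intro x₀ hx₀ v hv
  obtain ⟨hK, hFval, hFlip⟩ := hF
  set S := 𝒦 + ball (0 : En n) δ
  have hS : ball x₀ δ ⊆ S := fun z hz =>
    ⟨x₀, hx₀, z - x₀, mem_ball_zero_iff.2 (mem_ball_iff_norm.1 hz), add_sub_cancel x₀ z⟩
  have hMS : ∀ x ∈ S, ∀ w ∈ F x, ‖w‖ ≤ M := by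
    obtain ⟨C, hC⟩ := isBounded_iff_forall_norm_le.1 <|
      (hFval 0).2.2.isBounded.biUnion_of_lipschitz hFlip (h𝒦.isBounded.add isBounded_ball)
    refine fun x hx w hw => hM ▸ le_csSup ⟨C, ?_⟩ ⟨x, hx, w, hw, rfl⟩
    rintro _ ⟨x, hx, w, hw, rfl⟩
    exact hC w (mem_biUnion hx hw)
  have hM0 : 0 ≤ M := (norm_nonneg v).trans (hMS x₀ (hS (mem_ball_self hδ)) v hv)
  have hδ₁0 : 0 ≤ δ₁ := hδ₁ ▸ by positivity
  have hMδ₁ : M * δ₁ < δ := by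
    rw [hδ₁, mul_div_assoc', div_lt_iff₀ (by linarith)]
    linarith
  obtain ⟨f, hf, hfF, hfv⟩ := exists_continuous_selection_norm_sub_le (fun x => (hFval x).1)
    (fun x => (hFval x).2.2.isComplete) (fun x => (hFval x).2.1) hFlip hv
  obtain ⟨y, hy0, hy⟩ := exists_forall_hasDerivWithinAt_Icc_of_continuousOn hM0 hδ₁0
    hf.continuousOn fun x hx => hMS x (hS (closedBall_subset_ball hMδ₁ hx)) _ (hfF x)
  refine ⟨y, f ∘ y, hy0, fun t ht => (hy t ht).2, hf.comp_continuousOn fun t ht =>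
    (hy t ht).2.continuousWithinAt, fun t _ => hfF _, fun t ht => ?_⟩
  calc ‖f (y t) - v‖ ≤ K * ‖y t - x₀‖ := hfv _
    _ ≤ K * (M * t) := mul_le_mul_of_nonneg_left (mem_closedBall_iff_norm.1 (hy t ht).1) hK.le
    _ = K * M * t := by ring

/-- Under (F) (with constant `K`) and (H), for a compact `𝒦`, `δ > 0`,
`M = sup{‖v‖ : v ∈ F(x), x ∈ 𝒦 + δ𝔹ⁿ}` and `δ₁ = δ/(M+1)`: for every `x₀ ∈ 𝒦` and
`v ∈ F(x₀)` there is a `C¹` trajectory `y` of `ẏ ∈ F(y)` with `y(0) = x₀` and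
`‖ẏ(t) − v‖ ≤ KMt` on `[0,δ₁]`. -/
theorem smooth_trajectory_approx {n : ℕ} (F : En n → Set (En n)) (K c₀ K₁ : ℝ)
    (gradp : En n → En n → En n) (hF : HypF F K) (hH : HypH F gradp c₀ K₁)
    (𝒦 : Set (En n)) (h𝒦 : IsCompact 𝒦) (δ M δ₁ : ℝ) (hδ : 0 < δ)
    (hM : M = sSup {r : ℝ | ∃ x ∈ 𝒦 + Metric.ball (0 : En n) δ, ∃ w ∈ F x, r = ‖w‖})
    (hδ₁ : δ₁ = δ / (M + 1)) :
    ∀ x₀ ∈ 𝒦, ∀ v ∈ F x₀, ∃ y y' : ℝ → En n,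
      y 0 = x₀ ∧
      (∀ t ∈ Icc (0 : ℝ) δ₁, HasDerivWithinAt y (y' t) (Icc (0 : ℝ) δ₁) t) ∧
      ContinuousOn y' (Icc (0 : ℝ) δ₁) ∧
      (∀ t ∈ Icc (0 : ℝ) δ₁, y' t ∈ F (y t)) ∧
      (∀ t ∈ Icc (0 : ℝ) δ₁, ‖y' t - v‖ ≤ K * M * t) :=
  smooth_trajectory_approx_general F K hF 𝒦 h𝒦 δ M δ₁ hδ hM hδ₁
end

section
/- Let F satisfy hypothesis (F), let H satisfy hypothesis (H), and let 𝒮 ⊆ ℝⁿ be a closed target set. Let x ∈ ℝⁿ∖𝒮, let x(·) be an optimal trajectory starting from x and reaching 𝒮 in time T(x), let x̄ = x(T(x)), and let ξ be a proximal inner unit normal to 𝒮 at x̄ with H(x̄, ξ) = 0. If p : [0,T(x)] → ℝⁿ is an absolutely continuous arc satisfying ẋ(t) = ∇_p H(x(t),p(t)) and −ṗ(t) ∈ ∂_x H(x(t),p(t)) for a.e. t ∈ [0,T(x)], together with the terminal condition p(T(x)) = ξ, then H(x(t), p(t)) = 0 for all t ∈ [0, T(x)]. -/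
open Set MeasureTheory Filter Topology Metric
open scoped ENNReal Pointwise

open scoped NNReal RealInnerProductSpace

/-! Write `h t = H(x t, p t)`. At almost every `t` with `p t ≠ 0`, convexity of `H` in `p`,
semiconvexity of `H` in `x` (which passes to Clarke gradients) and the Lipschitz dependence of
`∇ₚH` on `x` bound `h u - h t` from below by `⟪ẋ t, p u - p t⟫ - ⟪ṗ t, x u - x t⟫ + o(u - t)`,
a function with derivative `⟪ẋ, ṗ⟫ - ⟪ṗ, ẋ⟫ = 0` at `t`; so `h' t = 0` wherever `h` is
differentiable. Where `p t = 0`, `h t = H(x t, 0) = 0`. Since `h` is Lipschitz and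
`h T = H(x̄, ξ) = 0`, it follows that `h` vanishes identically. -/

section Hamiltonian

variable {n : ℕ} {F : En n → Set (En n)} {x : En n}

lemma inner_le_ham (hc : IsCompact (F x)) {v : En n} (hv : v ∈ F x) (p : En n) :
    ⟪p, v⟫ ≤ Ham F x p :=
  le_csSup (hc.bddAbove_image (by fun_prop)) (mem_image_of_mem _ hv)

lemma ham_le (hne : (F x).Nonempty) {p : En n} {c : ℝ} (h : ∀ v ∈ F x, ⟪p, v⟫ ≤ c) :
    Ham F x p ≤ c :=
  csSup_le (hne.image _) (forall_mem_image.2 h)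

lemma ham_zero_right (hne : (F x).Nonempty) : Ham F x 0 = 0 := by
  simp [Ham, hne.image_const]

lemma convexOn_ham (hne : (F x).Nonempty) (hc : IsCompact (F x)) :
    ConvexOn ℝ univ (Ham F x) := by
  refine ⟨convex_univ, fun p _ q _ a b ha hb _ => ham_le hne fun v hv => ?_⟩
  rw [inner_add_left, real_inner_smul_left, real_inner_smul_left, smul_eq_mul, smul_eq_mul]
  gcongr <;> exact inner_le_ham hc hv _

lemma ham_le_ham_add_of_norm_le (hne : (F x).Nonempty) (hc : IsCompact (F x)) {M : ℝ}
    (hM : ∀ v ∈ F x, ‖v‖ ≤ M) (p q : En n) : Ham F x p ≤ Ham F x q + M * ‖p - q‖ :=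
  ham_le hne fun v hv => calc
    ⟪p, v⟫ = ⟪q, v⟫ + ⟪p - q, v⟫ := by rw [inner_sub_left]; ring
    _ ≤ Ham F x q + ‖p - q‖ * ‖v‖ := add_le_add (inner_le_ham hc hv q) (real_inner_le_norm _ _)
    _ ≤ Ham F x q + M * ‖p - q‖ := by rw [mul_comm M]; gcongr; exact hM v hv

lemma HypF.ham_le_ham_add {K : ℝ} (hF : HypF F K) (p x y : En n) :
    Ham F x p ≤ Ham F y p + K * ‖p‖ * ‖x - y‖ :=
  ham_le (hF.2.1 x).1 fun v hv => by
    obtain ⟨v', hv', hvv'⟩ := hF.2.2 y x v hv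
    calc ⟪p, v⟫ = ⟪p, v'⟫ + ⟪p, v - v'⟫ := by rw [inner_sub_right]; ring
      _ ≤ Ham F y p + ‖p‖ * (K * ‖y - x‖) :=
          add_le_add (inner_le_ham (hF.2.1 y).2.2 hv' p)
            ((real_inner_le_norm _ _).trans (by gcongr))
      _ = Ham F y p + K * ‖p‖ * ‖x - y‖ := by rw [norm_sub_rev]; ring

lemma HypF.lipschitzWith_ham {K : ℝ} (hF : HypF F K) (p : En n) :
    LipschitzWith (K * ‖p‖).toNNReal (Ham F · p) :=
  LipschitzWith.of_dist_le' fun x y => by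
    rw [Real.dist_eq, dist_eq_norm, abs_sub_le_iff]
    have hyx := hF.ham_le_ham_add p y x
    rw [norm_sub_rev] at hyx
    exact ⟨by linarith [hF.ham_le_ham_add p x y], by linarith⟩

lemma HypF.exists_norm_le {K : ℝ} (hF : HypF F K) :
    ∃ M₀, ∀ z, ∀ v ∈ F z, ‖v‖ ≤ M₀ + K * ‖z‖ := by
  obtain ⟨M₀, hM₀⟩ := (hF.2.1 0).2.2.isBounded.exists_norm_le
  refine ⟨M₀, fun z v hv => ?_⟩
  obtain ⟨v', hv', hvv'⟩ := hF.2.2 0 z v hv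
  calc ‖v‖ ≤ ‖v'‖ + ‖v - v'‖ := norm_le_norm_add_norm_sub' v v'
    _ ≤ M₀ + K * ‖z‖ := by rw [zero_sub, norm_neg] at hvv'; linarith [hM₀ v' hv']

end Hamiltonian

section Convexity

variable {E : Type*} [NormedAddCommGroup E] [InnerProductSpace ℝ E]

lemma ConvexOn.add_inner_le_of_hasGradientAt [CompleteSpace E] {f : E → ℝ} (hf : ConvexOn ℝ univ f) {x g : E}
    (hg : HasGradientAt f g x) (z : E) : f x + ⟪g, z - x⟫ ≤ f z := by
  set ℓ : ℝ →ᵃ[ℝ] E := AffineMap.lineMap x z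
  have hline : HasDerivAt (f ∘ ℓ) ⟪g, z - x⟫ 0 := by
    have hg' : HasFDerivAt f (InnerProductSpace.toDual ℝ E g) (ℓ 0) := by
      simpa [ℓ] using hg.hasFDerivAt
    simpa using hg'.comp_hasDerivAt (0 : ℝ) AffineMap.hasDerivAt_lineMap
  have := (hf.comp_affineMap ℓ).le_slope_of_hasDerivAt
    (mem_univ 0) (mem_univ 1) zero_lt_one hline
  simp only [slope_def_field, Function.comp_apply, AffineMap.lineMap_apply_one,
    AffineMap.lineMap_apply_zero, sub_zero, div_one, ℓ] at this
  linarith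

/-- Leftmost-maximiser argument: at the first point `θ` where `χ` attains a positive maximum,
midpoint convexity on `[θ - δ, θ + δ]` forces `χ θ` below the maximum. -/
lemma nonpos_of_midpoint_le {χ : ℝ → ℝ} (hc : Continuous χ)
    (hm : ∀ s t, χ ((s + t) / 2) ≤ (χ s + χ t) / 2) {a b : ℝ} (ha : χ a = 0) (hb : χ b = 0) :
    ∀ s ∈ Icc a b, χ s ≤ 0 := by
  by_contra! hpos
  obtain ⟨s, hs, hχs⟩ := hpos
  obtain ⟨θmax, hθmax, hmax⟩ := isCompact_Icc.exists_isMaxOn ⟨s, hs⟩ hc.continuousOn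
  set A := Icc a b ∩ χ ⁻¹' {χ θmax}
  have hA : IsCompact A := isCompact_Icc.inter_right (isClosed_singleton.preimage hc)
  obtain ⟨θ, ⟨hθ, hθm⟩, hθleast⟩ := hA.exists_isLeast ⟨θmax, hθmax, rfl⟩
  have hle : ∀ s ∈ Icc a b, χ s ≤ χ θ := fun s hs => (hθm : χ θ = χ θmax) ▸ hmax hs
  have hm0 : 0 < χ θ := hχs.trans_le (hle s hs)
  have haθ : a < θ := hθ.1.lt_of_ne (by rintro rfl; linarith)
  have hθb : θ < b := hθ.2.lt_of_ne (by rintro rfl; linarith)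
  set δ := min (θ - a) (b - θ)
  have hδ : 0 < δ := lt_min (by linarith) (by linarith)
  have hleft : θ - δ ∈ Icc a b := ⟨by linarith [min_le_left (θ - a) (b - θ)], by linarith⟩
  have hright : θ + δ ∈ Icc a b := ⟨by linarith, by linarith [min_le_right (θ - a) (b - θ)]⟩
  have hlt : χ (θ - δ) < χ θ := by
    refine (hle _ hleft).lt_of_ne fun h => ?_
    linarith [hθleast ⟨hleft, h.trans hθm⟩]
  have := hm (θ - δ) (θ + δ)
  rw [show (θ - δ + (θ + δ)) / 2 = θ by ring] at this
  linarith [hle _ hright]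

lemma convexOn_univ_of_midpoint_le {f : E → ℝ} (hc : Continuous f)
    (hm : ∀ a b : E, f ((1 / 2 : ℝ) • (a + b)) ≤ (f a + f b) / 2) : ConvexOn ℝ univ f := by
  refine ⟨convex_univ, fun x _ y _ α β _ hβ hαβ => ?_⟩
  set χ : ℝ → ℝ := fun s => f ((1 - s) • x + s • y) - ((1 - s) * f x + s * f y)
  have hχ : ∀ s t, χ ((s + t) / 2) ≤ (χ s + χ t) / 2 := fun s t => by
    have := hm ((1 - s) • x + s • y) ((1 - t) • x + t • y)
    rw [show (1 / 2 : ℝ) • ((1 - s) • x + s • y + ((1 - t) • x + t • y))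
      = (1 - (s + t) / 2) • x + ((s + t) / 2) • y by module] at this
    simp only [χ]
    linarith
  have := nonpos_of_midpoint_le (by fun_prop) hχ (a := 0) (b := 1) (by simp [χ]) (by simp [χ])
    β ⟨hβ, by linarith⟩
  rw [show α = 1 - β by linarith]
  simp only [χ, smul_eq_mul] at this ⊢
  linarith

lemma add_inner_sub_le_of_semiconvex [CompleteSpace E] {f : E → ℝ} {C : ℝ} (hc : Continuous f)
    (hsc : ∀ a b : E, (f a + f b) / 2 - f ((1 / 2 : ℝ) • (a + b)) ≥ -(C / 4) * ‖a - b‖ ^ 2)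
    {x g : E} (hg : HasGradientAt f g x) (z : E) :
    f x + ⟪g, z - x⟫ - C * ‖z - x‖ ^ 2 ≤ f z := by
  have hconv : ConvexOn ℝ univ (fun y => f y + C * ‖y‖ ^ 2) := by
    refine convexOn_univ_of_midpoint_le (by fun_prop) fun a b => ?_
    have hpar : ‖(1 / 2 : ℝ) • (a + b)‖ ^ 2 = (‖a‖ ^ 2 + ‖b‖ ^ 2) / 2 - ‖a - b‖ ^ 2 / 4 := by
      rw [norm_smul, mul_pow, norm_add_sq_real, norm_sub_sq_real]
      norm_num
      ring
    rw [hpar]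
    linarith [hsc a b]
  have hgrad : HasGradientAt (fun y => f y + C * ‖y‖ ^ 2) (g + (2 * C) • x) x := by
    refine hasGradientAt_iff_hasFDerivAt.2 <|
      (hg.hasFDerivAt.add ((hasStrictFDerivAt_norm_sq x).hasFDerivAt.const_mul C)).congr_fderiv ?_
    ext y
    simp only [add_apply, InnerProductSpace.toDual_apply_apply, smul_apply, coe_innerSL_apply,
      nsmul_eq_mul, inner_add_left, real_inner_smul_left]
    ring
  have := hconv.add_inner_le_of_hasGradientAt hgrad z
  have hsq : ‖z - x‖ ^ 2 = ‖z‖ ^ 2 - 2 * ⟪x, z⟫ + ‖x‖ ^ 2 := by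
    rw [norm_sub_sq_real, real_inner_comm]
  rw [inner_add_left, real_inner_smul_left, inner_sub_right x, real_inner_self_eq_norm_sq] at this
  rw [hsq]
  linarith

end Convexity

section Clarke

variable {n : ℕ} {f : En n → ℝ} {x ζ : En n}

lemma norm_le_of_mem_clarkeGradAt {L : ℝ≥0} (hf : LipschitzWith L f)
    (hζ : ζ ∈ clarkeGradAt f x) : ‖ζ‖ ≤ L := by
  suffices clarkeGradAt f x ⊆ closedBall 0 L by simpa using this hζ
  refine convexHull_min ?_ (convex_closedBall 0 L)
  rintro v ⟨y, g, -, hg, hgv⟩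
  refine isClosed_closedBall.mem_of_tendsto hgv (Eventually.of_forall fun i => ?_)
  simpa using (hg i).hasFDerivAt.le_of_lipschitz hf

lemma add_inner_sub_le_of_mem_clarkeGradAt {C : ℝ} (hf : Continuous f)
    (hsupp : ∀ y g, HasGradientAt f g y → ∀ z, f y + ⟪g, z - y⟫ - C * ‖z - y‖ ^ 2 ≤ f z)
    (hζ : ζ ∈ clarkeGradAt f x) (z : En n) : f x + ⟪ζ, z - x⟫ - C * ‖z - x‖ ^ 2 ≤ f z := by
  suffices clarkeGradAt f x ⊆ {ζ | ⟪ζ, z - x⟫ ≤ f z - f x + C * ‖z - x‖ ^ 2} by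
    have : ⟪ζ, z - x⟫ ≤ f z - f x + C * ‖z - x‖ ^ 2 := this hζ
    linarith
  refine convexHull_min ?_ (convex_halfSpace_le (innerₛₗ ℝ |>.flip (z - x)).isLinear _)
  rintro v ⟨y, g, hy, hg, hgv⟩
  have hlim : Tendsto (fun i => f (y i) + ⟪g i, z - y i⟫ - C * ‖z - y i‖ ^ 2) atTop
      (𝓝 (f x + ⟪v, z - x⟫ - C * ‖z - x‖ ^ 2)) := by
    have hzy := tendsto_const_nhds (x := z).sub hy
    exact (((hf.tendsto x).comp hy).add (hgv.inner hzy)).sub ((hzy.norm.pow 2).const_mul C)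
  have := le_of_tendsto hlim (Eventually.of_forall fun i => hsupp (y i) (g i) (hg i) z)
  show ⟪v, z - x⟫ ≤ f z - f x + C * ‖z - x‖ ^ 2
  linarith

end Clarke

lemma hasDerivAt_norm_sub_mul_norm_sub {E E' : Type*} [NormedAddCommGroup E] [NormedSpace ℝ E]
    [NormedAddCommGroup E'] [NormedSpace ℝ E'] {f : ℝ → E} {g : ℝ → E'} {f' : E} {g' : E'}
    {t : ℝ} (hf : HasDerivAt f f' t) (hg : HasDerivAt g g' t) :
    HasDerivAt (fun u => ‖f u - f t‖ * ‖g u - g t‖) 0 t := by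
  have hsmall : (fun u => ‖f u - f t‖) =o[𝓝 t] fun _ => (1 : ℝ) :=
    (Asymptotics.isLittleO_one_iff ℝ).2 <| by
      simpa using (hf.continuousAt.tendsto.sub_const (f t)).norm
  rw [hasDerivAt_iff_isLittleO]
  simpa using hsmall.mul_isBigO hg.isBigO_sub.norm_left

section Conservation

variable {n : ℕ} {F : En n → Set (En n)} {gradp : En n → En n → En n} {K c₀ K₁ : ℝ}

lemma ham_lower_bound (hF : HypF F K) (hH : HypH F gradp c₀ K₁) {x₁ p ζ : En n} (hp : p ≠ 0)
    (hζ : ζ ∈ clarkeGradAt (Ham F · p) x₁) (x₂ q : En n) :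
    Ham F x₁ p + ⟪gradp x₁ p, q - p⟫ + ⟪ζ, x₂ - x₁⟫
      - (K₁ * (‖x₂ - x₁‖ * ‖q - p‖) + c₀ * ‖p‖ * ‖x₂ - x₁‖ ^ 2) ≤ Ham F x₂ q := by
  have hcont := (hF.lipschitzWith_ham p).continuous
  have hsemi : Ham F x₁ p + ⟪ζ, x₂ - x₁⟫ - c₀ * ‖p‖ * ‖x₂ - x₁‖ ^ 2 ≤ Ham F x₂ p :=
    add_inner_sub_le_of_mem_clarkeGradAt hcont
      (fun _ _ hg z => add_inner_sub_le_of_semiconvex hcont (hH.2.2.1 p) hg z) hζ x₂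
  have hconv : Ham F x₂ p + ⟪gradp x₂ p, q - p⟫ ≤ Ham F x₂ q :=
    (convexOn_ham (hF.2.1 x₂).1 (hF.2.1 x₂).2.2).add_inner_le_of_hasGradientAt
      (hH.2.2.2.1 x₂ p hp) q
  have hgrad : ⟪gradp x₁ p, q - p⟫ - K₁ * (‖x₂ - x₁‖ * ‖q - p‖) ≤ ⟪gradp x₂ p, q - p⟫ := by
    have := (abs_le.1 ((abs_real_inner_le_norm (gradp x₂ p - gradp x₁ p) (q - p)).trans
      (mul_le_mul_of_nonneg_right (hH.2.2.2.2 p hp x₂ x₁) (norm_nonneg _)))).1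
    rw [inner_sub_left] at this
    linarith
  linarith

lemma hasDerivAt_ham_comp_eq_zero (hF : HypF F K) (hH : HypH F gradp c₀ K₁)
    {x p : ℝ → En n} {t : ℝ} {vp : En n} (hx : HasDerivAt x (gradp (x t) (p t)) t)
    (hp : HasDerivAt p vp t) (hvp : -vp ∈ clarkeGradAt (Ham F · (p t)) (x t)) (hpt : p t ≠ 0)
    (hd : DifferentiableAt ℝ (fun u => Ham F (x u) (p u)) t) :
    HasDerivAt (fun u => Ham F (x u) (p u)) 0 t := by
  set v := gradp (x t) (p t)
  set ψ : ℝ → ℝ := fun u => ⟪v, p u - p t⟫ + ⟪-vp, x u - x t⟫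
    - (K₁ * (‖x u - x t‖ * ‖p u - p t‖) + c₀ * ‖p t‖ * (‖x u - x t‖ * ‖x u - x t‖))
  have hψ : HasDerivAt ψ 0 t := by
    have h₁ := (hasDerivAt_const t v).inner ℝ (hp.sub_const (p t))
    have h₂ := (hasDerivAt_const t (-vp)).inner ℝ (hx.sub_const (x t))
    have h₃ := ((hasDerivAt_norm_sub_mul_norm_sub hx hp).const_mul K₁).add
      ((hasDerivAt_norm_sub_mul_norm_sub hx hx).const_mul (c₀ * ‖p t‖))
    have h := (h₁.add h₂).sub h₃
    rw [inner_zero_left, inner_zero_left, add_zero, add_zero, mul_zero, mul_zero, add_zero,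
      sub_zero, inner_neg_left, real_inner_comm v, add_neg_cancel] at h
    exact h
  have hmin : IsLocalMin (fun u => Ham F (x u) (p u) - ψ u) t :=
    Eventually.of_forall fun u => by
      have := ham_lower_bound hF hH hpt hvp (x u) (p u)
      simp only [ψ, sub_self, inner_zero_right, norm_zero, add_zero, ← sq]
      linarith
  have := hmin.hasDerivAt_eq_zero (hd.hasDerivAt.sub hψ)
  rw [sub_zero] at this
  exact this ▸ hd.hasDerivAt

end Conservation

namespace IsACWith

variable {n : ℕ} {y : ℝ → En n} {a b : ℝ} {P : ℝ → En n → Prop}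

lemma continuousOn (h : IsACWith y a b P) (hab : a ≤ b) : ContinuousOn y (Icc a b) := by
  obtain ⟨v, hint, -, hrep⟩ := h
  have := intervalIntegral.continuousOn_primitive_interval' (hint b (right_mem_Icc.2 hab))
    left_mem_uIcc
  rw [uIcc_of_le hab] at this
  exact (continuousOn_const.add this).congr hrep

lemma lipschitzOnWith (h : IsACWith y a b P) {C : ℝ} (hC : ∀ s ∈ Icc a b, ∀ v, P s v → ‖v‖ ≤ C) :
    LipschitzOnWith C.toNNReal y (Icc a b) := by
  obtain ⟨v, hint, hP, hrep⟩ := h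
  refine LipschitzOnWith.of_dist_le' fun s hs t ht => ?_
  have hst : y s - y t = ∫ u in t..s, v u := by
    rw [hrep s hs, hrep t ht, add_sub_add_left_eq_sub,
      intervalIntegral.integral_interval_sub_left (hint s hs) (hint t ht)]
  rw [dist_eq_norm, hst, Real.dist_eq]
  refine intervalIntegral.norm_integral_le_of_norm_le_const_ae ?_
  filter_upwards [hP] with u hu hut
  have hu' : u ∈ Icc a b := uIcc_subset_Icc ht hs (uIoc_subset_uIcc hut)
  exact hC u hu' _ (hu hu')

lemma ae_exists_hasDerivAt (h : IsACWith y a b P) :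
    ∀ᵐ t, t ∈ Ioo a b → ∃ v, HasDerivAt y v t ∧ P t v := by
  obtain ⟨v, hint, hP, hrep⟩ := h
  rcases lt_or_ge a b with hab | hba
  · filter_upwards [(hint b (right_mem_Icc.2 hab.le)).ae_hasDerivAt_integral, hP]
      with t hderiv hPt ht
    have htI := Ioo_subset_Icc_self ht
    refine ⟨v t, ?_, hPt htI⟩
    refine ((hderiv (Icc_subset_uIcc htI) a left_mem_uIcc).const_add (y a)).congr_of_eventuallyEq ?_
    exact eventually_of_mem (Ioo_mem_nhds ht.1 ht.2) fun u hu => hrep u (Ioo_subset_Icc_self hu)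
  · exact Eventually.of_forall fun t ht => absurd (ht.1.trans ht.2) hba.not_gt

end IsACWith

section Lipschitz

variable {n : ℕ} {F : En n → Set (En n)} {K : ℝ} {a b : ℝ}

lemma IsTraj.exists_lipschitzOnWith (hF : HypF F K) {y : ℝ → En n} (hy : IsTraj F y a b)
    (hab : a ≤ b) : ∃ L : ℝ≥0, LipschitzOnWith L y (Icc a b) := by
  obtain ⟨R, hR⟩ := isCompact_Icc.exists_bound_of_continuousOn (IsACWith.continuousOn hy hab)
  obtain ⟨M₀, hM₀⟩ := hF.exists_norm_le
  refine ⟨_, IsACWith.lipschitzOnWith hy (C := M₀ + K * R) fun s hs v hv =>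
    (hM₀ _ v hv).trans ?_⟩
  gcongr
  exacts [hF.1.le, hR s hs]

lemma exists_lipschitzOnWith_of_mem_clarkeGradAt (hF : HypF F K) {x p : ℝ → En n}
    (hp : IsACWith p a b (fun s v => -v ∈ clarkeGradAt (Ham F · (p s)) (x s))) (hab : a ≤ b) :
    ∃ L : ℝ≥0, LipschitzOnWith L p (Icc a b) := by
  obtain ⟨B, hB⟩ := isCompact_Icc.exists_bound_of_continuousOn (hp.continuousOn hab)
  refine ⟨_, hp.lipschitzOnWith (C := K * B) fun s hs v hv => ?_⟩
  have := norm_le_of_mem_clarkeGradAt (hF.lipschitzWith_ham (p s)) hv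
  rw [norm_neg, Real.coe_toNNReal _ (mul_nonneg hF.1.le (norm_nonneg _))] at this
  exact this.trans (mul_le_mul_of_nonneg_left (hB s hs) hF.1.le)

lemma HypF.exists_lipschitzOnWith_ham_comp (hF : HypF F K) {x p : ℝ → En n} {s : Set ℝ}
    (hs : IsCompact s) {Lx Lp : ℝ≥0} (hx : LipschitzOnWith Lx x s)
    (hp : LipschitzOnWith Lp p s) :
    ∃ L : ℝ≥0, LipschitzOnWith L (fun t => Ham F (x t) (p t)) s := by
  obtain ⟨B, hB⟩ := hs.exists_bound_of_continuousOn hp.continuousOn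
  obtain ⟨R, hR⟩ := hs.exists_bound_of_continuousOn hx.continuousOn
  obtain ⟨M₀, hM₀⟩ := hF.exists_norm_le
  set M := M₀ + K * R
  refine ⟨_, LipschitzOnWith.of_dist_le' (K := K * B * Lx + M * Lp) fun t ht u hu => ?_⟩
  have hM : ∀ z, ‖z‖ ≤ R → ∀ v ∈ F z, ‖v‖ ≤ M := fun z hz v hv =>
    (hM₀ z v hv).trans (add_le_add_right (mul_le_mul_of_nonneg_left hz hF.1.le) M₀)
  have hM0 : 0 ≤ M := by
    obtain ⟨v, hv⟩ := (hF.2.1 (x u)).1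
    exact (norm_nonneg v).trans (hM _ (hR u hu) v hv)
  have hxd : ‖x t - x u‖ ≤ Lx * dist t u := by
    rw [← dist_eq_norm]; exact hx.dist_le_mul t ht u hu
  have hpd : ‖p t - p u‖ ≤ Lp * dist t u := by
    rw [← dist_eq_norm]; exact hp.dist_le_mul t ht u hu
  have hKx : K * ‖p t‖ * ‖x t - x u‖ ≤ K * B * (Lx * dist t u) := by
    have hB0 : 0 ≤ B := (norm_nonneg _).trans (hB t ht)
    exact mul_le_mul (mul_le_mul_of_nonneg_left (hB t ht) hF.1.le) hxd (norm_nonneg _)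
      (mul_nonneg hF.1.le hB0)
  have hMp : M * ‖p t - p u‖ ≤ M * (Lp * dist t u) := by gcongr
  have h₁ := hF.ham_le_ham_add (p t) (x t) (x u)
  have h₂ := hF.ham_le_ham_add (p t) (x u) (x t)
  have h₃ := ham_le_ham_add_of_norm_le (hF.2.1 _).1 (hF.2.1 _).2.2 (hM _ (hR u hu)) (p t) (p u)
  have h₄ := ham_le_ham_add_of_norm_le (hF.2.1 _).1 (hF.2.1 _).2.2 (hM _ (hR u hu)) (p u) (p t)
  rw [norm_sub_rev] at h₂ h₄
  rw [Real.dist_eq, abs_sub_le_iff]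
  constructor <;> linarith

end Lipschitz

/-- The square `f ^ 2` has derivative `0` both where `f ≠ 0` (by hypothesis) and where `f = 0`
(as `2 f f' = 0`), so it is constant. -/
lemma AbsolutelyContinuousOnInterval.eq_zero_of_hasDerivAt_zero_of_ne_zero {f : ℝ → ℝ} {a b : ℝ}
    (hf : AbsolutelyContinuousOnInterval f a b) (hab : a ≤ b) (hb : f b = 0)
    (hd : ∀ᵐ t, t ∈ Ioo a b → f t ≠ 0 → HasDerivAt f 0 t) : ∀ t ∈ Icc a b, f t = 0 := by
  have hsq : ∀ᵐ t, t ∈ uIcc a b → HasDerivAt (f * f) 0 t := by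
    filter_upwards [hf.ae_differentiableAt, hd, (Ioo_ae_eq_Icc (a := a) (b := b)).mem_iff]
      with t hdiff hzero hIoo ht
    by_cases hft : f t = 0
    · have h := (hdiff ht).hasDerivAt
      simpa [hft] using h.mul h
    · rw [uIcc_of_le hab] at ht
      have h := hzero (hIoo.2 ht) hft
      simpa using h.mul h
  obtain ⟨C, hC⟩ := (hf.mul hf).const_of_ae_hasDerivAt_zero hsq
  intro t ht
  have := (hC t (Icc_subset_uIcc ht)).trans (hC b right_mem_uIcc).symm
  simpa [hb] using this

theorem hamiltonian_constant_zero_general {n : ℕ} (F : En n → Set (En n)) (K c₀ K₁ : ℝ)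
    (gradp : En n → En n → En n) (hF : HypF F K) (hH : HypH F gradp c₀ K₁)
    (S : Set (En n))
    (x : En n) (xtraj : ℝ → En n) (Tx : ℝ)
    (hopt : OptimalTraj F S x xtraj Tx)
    (ξ : En n)
    (hH0 : Ham F (xtraj Tx) ξ = 0)
    (p : ℝ → En n)
    (hxeq : IsACWith xtraj 0 Tx (fun s v => v = gradp (xtraj s) (p s)))
    (hpeq : IsACWith p 0 Tx (fun s v => -v ∈ clarkeGradAt (fun z => Ham F z (p s)) (xtraj s)))
    (hterm : p Tx = ξ) :
    ∀ t ∈ Icc (0 : ℝ) Tx, Ham F (xtraj t) (p t) = 0 := by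
  obtain ⟨hTx, htraj, -, -, -⟩ := hopt
  obtain ⟨Lx, hLx⟩ := htraj.exists_lipschitzOnWith hF hTx
  obtain ⟨Lp, hLp⟩ := exists_lipschitzOnWith_of_mem_clarkeGradAt hF hpeq hTx
  obtain ⟨L, hL⟩ := hF.exists_lipschitzOnWith_ham_comp isCompact_Icc hLx hLp
  have hac : AbsolutelyContinuousOnInterval (fun t => Ham F (xtraj t) (p t)) 0 Tx :=
    LipschitzOnWith.absolutelyContinuousOnInterval (by rwa [uIcc_of_le hTx])
  refine hac.eq_zero_of_hasDerivAt_zero_of_ne_zero hTx (by rw [hterm, hH0]) ?_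
  filter_upwards [hxeq.ae_exists_hasDerivAt, hpeq.ae_exists_hasDerivAt, hac.ae_differentiableAt]
    with t hxd hpd hdiff ht hne
  obtain ⟨vx, hx, hvx⟩ := hxd ht
  obtain ⟨vp, hp, hvp⟩ := hpd ht
  have hpt : p t ≠ 0 := fun hpt => hne (by rw [hpt, ham_zero_right (hF.2.1 _).1])
  rw [hvx] at hx
  exact hasDerivAt_ham_comp_eq_zero hF hH hx hp hvp hpt
    (hdiff (Icc_subset_uIcc (Ioo_subset_Icc_self ht)))

/-- Under (F) and (H), along an optimal trajectory `x(·)` from `x ∉ 𝒮`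
with unit proximal inner normal `ξ` at `x̄ = x(T(x))` satisfying `H(x̄,ξ) = 0`, any dual
arc `p` solving the Hamiltonian inclusion with `p(T(x)) = ξ` satisfies
`H(x(t),p(t)) = 0` for all `t ∈ [0,T(x)]`. -/
theorem hamiltonian_constant_zero {n : ℕ} (F : En n → Set (En n)) (K c₀ K₁ : ℝ)
    (gradp : En n → En n → En n) (hF : HypF F K) (hH : HypH F gradp c₀ K₁)
    (S : Set (En n)) (hScl : IsClosed S)
    (x : En n) (hxS : x ∉ S) (xtraj : ℝ → En n) (Tx : ℝ)
    (hopt : OptimalTraj F S x xtraj Tx)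
    (ξ : En n) (hξunit : ‖ξ‖ = 1)
    (hξnor : ξ ∈ proxNormal (closure Sᶜ) (xtraj Tx))
    (hH0 : Ham F (xtraj Tx) ξ = 0)
    (p : ℝ → En n)
    (hxeq : IsACWith xtraj 0 Tx (fun s v => v = gradp (xtraj s) (p s)))
    (hpeq : IsACWith p 0 Tx (fun s v => -v ∈ clarkeGradAt (fun z => Ham F z (p s)) (xtraj s)))
    (hterm : p Tx = ξ) :
    ∀ t ∈ Icc (0 : ℝ) Tx, Ham F (xtraj t) (p t) = 0 :=
  hamiltonian_constant_zero_general F K c₀ K₁ gradp hF hH S x xtraj Tx hopt ξ hH0 p hxeq hpeq hterm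
end

section
/- Let g ∈ C²_b(ℝⁿ) with ∇g ≠ 0 on ∂𝒮, where 𝒮 = {x ∈ ℝⁿ : g(x) ≤ 0}, and let Σ be a subset of ∂𝒮. Let F satisfy hypothesis (F) with 0 ∈ F(x) for every x ∈ ∂𝒮, let H(x,p) = sup_{v∈F(x)} ⟨p,v⟩ be of class C^{1,1} on ℝⁿ×(ℝⁿ∖{0}), and suppose that for all x ∈ ∂𝒮∖Σ and all λ ∈ ℝ one has ∇_x H(x, −∇g(x)) − ∇_p H(x, −∇g(x))·∇²g(x) ≠ λ∇g(x). Then: if for some x̄ ∈ ∂𝒮 there exists a nonzero vector ξ ∈ N^P_{cl(ℝⁿ∖𝒮)}(x̄) with H(x̄, ξ) = 0, then x̄ ∈ Σ. -/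
open Set MeasureTheory Filter Topology Metric
open scoped ENNReal Pointwise

open scoped Gradient

/-! A proximal normal `ξ ≠ 0` to `cl {g > 0}` at a point `x̄` with `g x̄ = 0`, `∇g(x̄) ≠ 0` is a
negative multiple of `∇g(x̄)`, so `H(x̄, -∇g(x̄)) = 0` by positive homogeneity of `H(x̄, ·)`.
Near `x̄` the level set `{g = 0}` lies in `∂𝒮`, where `0 ∈ F(x)` forces `H ≥ 0`; hence
`ψ(x) = H(x, -∇g(x))` has a local minimum at `x̄` on `{g = g x̄}`. As `H` is `C¹` near
`(x̄, -∇g(x̄))`, `ψ` is strictly differentiable with gradient `∇ₓH - ∇²g ∇ₚH` (the Hessian being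
symmetric), and the Lagrange multiplier rule makes this gradient a multiple of `∇g(x̄)`.
Condition (d) then puts `x̄` in `Σ`. -/

open InnerProductSpace

section InnerProductSpace

variable {E : Type*} [NormedAddCommGroup E] [InnerProductSpace ℝ E]

theorem inner_nonpos_of_inner_nonneg {u ξ : E} (hu : u ≠ 0)
    (h : ∀ w, 0 < ⟪u, w⟫_ℝ → ⟪ξ, w⟫_ℝ ≤ 0) {w : E} (hw : 0 ≤ ⟪u, w⟫_ℝ) : ⟪ξ, w⟫_ℝ ≤ 0 := by
  have hlim : Tendsto (fun ε : ℝ => ⟪ξ, w + ε • u⟫_ℝ) (𝓝[>] 0) (𝓝 ⟪ξ, w⟫_ℝ) :=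
    tendsto_nhdsWithin_of_tendsto_nhds
      ((by fun_prop : Continuous fun ε : ℝ => ⟪ξ, w + ε • u⟫_ℝ).tendsto' 0 _ (by simp))
  refine le_of_tendsto hlim ?_
  filter_upwards [self_mem_nhdsWithin] with ε (hε : 0 < ε)
  apply h
  rw [inner_add_right, real_inner_smul_right]
  have := real_inner_self_pos.mpr hu
  positivity

theorem exists_nonpos_eq_smul_of_inner_nonpos {u ξ : E} (hu : u ≠ 0)
    (h : ∀ w, 0 < ⟪u, w⟫_ℝ → ⟪ξ, w⟫_ℝ ≤ 0) : ∃ c : ℝ, c ≤ 0 ∧ ξ = c • u := by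
  have h' := fun w => inner_nonpos_of_inner_nonneg (w := w) hu h
  have hspan : ξ ∈ ℝ ∙ u := by
    rw [← Submodule.orthogonal_orthogonal (ℝ ∙ u), Submodule.mem_orthogonal]
    intro w hw
    rw [Submodule.mem_orthogonal_singleton_iff_inner_right] at hw
    have h₁ := h' w hw.ge
    have h₂ := h' (-w) (by rw [inner_neg_right, hw, neg_zero])
    rw [inner_neg_right] at h₂
    rw [real_inner_comm]
    linarith
  obtain ⟨c, rfl⟩ := Submodule.mem_span_singleton.mp hspan
  refine ⟨c, ?_, rfl⟩
  have := h' u real_inner_self_nonneg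
  rw [real_inner_smul_left] at this
  exact nonpos_of_mul_nonpos_left this (real_inner_self_pos.mpr hu)

theorem IsLocalExtrOn.exists_eq_smul_of_hasStrictFDerivAt [CompleteSpace E] {φ g : E → ℝ}
    {x u v : E} (hextr : IsLocalExtrOn φ {y | g y = g x} x)
    (hg : HasStrictFDerivAt g (toDual ℝ E u) x) (hφ : HasStrictFDerivAt φ (toDual ℝ E v) x)
    (hu : u ≠ 0) : ∃ l : ℝ, v = l • u := by
  obtain ⟨a, b, hab, heq⟩ := hextr.exists_multipliers_of_hasStrictFDerivAt_1d hg hφ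
  have hlin : a • u + b • v = 0 := by
    apply (toDual ℝ E).injective
    simpa using heq
  have hb : b ≠ 0 := by
    rintro rfl
    have ha : a ≠ 0 := fun ha => hab (by simp [ha])
    simp only [zero_smul, add_zero, smul_eq_zero, ha, false_or] at hlin
    exact hu hlin
  refine ⟨-(a / b), ?_⟩
  have hv : b • v = -(a • u) := eq_neg_of_add_eq_zero_right hlin
  rw [← inv_smul_smul₀ hb v, hv, smul_neg, smul_smul, neg_smul, div_eq_inv_mul]

end InnerProductSpace

section Gradient

variable {E : Type*} [NormedAddCommGroup E] [InnerProductSpace ℝ E] [CompleteSpace E]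

theorem HasGradientAt.eventually_pos_of_inner_pos {g : E → ℝ} {u x w : E}
    (hg : HasGradientAt g u x) (hx : g x = 0) (hw : 0 < ⟪u, w⟫_ℝ) :
    ∀ᶠ t in 𝓝[>] (0 : ℝ), 0 < g (x + t • w) := by
  have hderiv : HasDerivAt (fun t : ℝ => g (x + t • w)) ⟪u, w⟫_ℝ 0 := by
    have : HasLineDerivAt ℝ g ⟪u, w⟫_ℝ x w := by
      simpa [toDual_apply_apply] using hg.hasFDerivAt.hasLineDerivAt w
    exact this
  have hsign := eventually_nhdsWithin_sign_eq_of_deriv_pos (hderiv.deriv ▸ hw) (by simpa using hx)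
  filter_upwards [eventually_nhdsWithin_of_eventually_nhds hsign, self_mem_nhdsWithin]
    with t ht (htpos : 0 < t)
  rw [sub_zero, sign_pos htpos] at ht
  exact sign_eq_one_iff.mp ht

theorem mem_frontier_setOf_nonpos {g : E → ℝ} {u x : E} (hg : HasGradientAt g u x)
    (hu : u ≠ 0) (hx : g x = 0) : x ∈ frontier {y | g y ≤ 0} := by
  rw [frontier_eq_closure_inter_closure]
  refine ⟨subset_closure hx.le, ?_⟩
  have hray : Tendsto (fun t : ℝ => x + t • u) (𝓝[>] 0) (𝓝 x) :=
    tendsto_nhdsWithin_of_tendsto_nhds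
      ((continuous_const.add (continuous_id.smul continuous_const)).tendsto' 0 x (by simp))
  refine mem_closure_of_tendsto hray ?_
  filter_upwards [hg.eventually_pos_of_inner_pos hx (real_inner_self_pos.mpr hu)] with t ht
  exact not_le.mpr ht

theorem ContDiffAt.gradient {g : E → ℝ} {x : E} {m k : WithTop ℕ∞} (hg : ContDiffAt ℝ k g x)
    (hmk : m + 1 ≤ k) : ContDiffAt ℝ m (∇ g) x :=
  (toDual ℝ E).symm.toContinuousLinearEquiv.contDiff.contDiffAt.comp x (hg.fderiv_right hmk)

theorem ContDiffAt.hasStrictFDerivAt_gradient {g : E → ℝ} {x : E} (hg : ContDiffAt ℝ 1 g x) :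
    HasStrictFDerivAt g (toDual ℝ E (∇ g x)) x := by
  simpa [gradient] using hg.hasStrictFDerivAt one_ne_zero

theorem inner_fderiv_gradient_comm {g : E → ℝ} {x : E} (hg : ContDiffAt ℝ 2 g x) (v w : E) :
    ⟪fderiv ℝ (∇ g) x v, w⟫_ℝ = ⟪fderiv ℝ (∇ g) x w, v⟫_ℝ := by
  have hgrad : ∇ g = (toDual ℝ E).symm ∘ fderiv ℝ g := rfl
  have hsymm : IsSymmSndFDerivAt ℝ g x := hg.isSymmSndFDerivAt (by simp)
  rw [hgrad, LinearIsometryEquiv.comp_fderiv]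
  simp only [ContinuousLinearMap.comp_apply, LinearIsometryEquiv.coe_coe'']
  rw [toDual_symm_apply, toDual_symm_apply]
  exact hsymm v w

end Gradient

section Continuity

variable {E G : Type*} [NormedAddCommGroup E] [NormedAddCommGroup G]

theorem continuousAt_of_norm_sub_le {f : E × E → G} {q₀ : E × E} {L : ℝ}
    (h : ∀ᶠ q in 𝓝 q₀, ‖f q - f q₀‖ ≤ L * (‖q.1 - q₀.1‖ + ‖q.2 - q₀.2‖)) : ContinuousAt f q₀ := by
  have hbound : Tendsto (fun q : E × E => L * (‖q.1 - q₀.1‖ + ‖q.2 - q₀.2‖)) (𝓝 q₀) (𝓝 0) :=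
    (by fun_prop : Continuous fun q : E × E => L * (‖q.1 - q₀.1‖ + ‖q.2 - q₀.2‖)).tendsto' _ _
      (by simp)
  exact tendsto_iff_norm_sub_tendsto_zero.mpr
    (squeeze_zero' (Eventually.of_forall fun _ => norm_nonneg _) h hbound)

theorem continuousAt_uncurry_of_lipschitz_on_compact_away_zero [ProperSpace E] {a b : E → E → G}
    (hab : ∀ K : Set (E × E), IsCompact K → (∀ q ∈ K, q.2 ≠ 0) →
      ∃ L : ℝ, ∀ q ∈ K, ∀ q' ∈ K,
        ‖a q.1 q.2 - a q'.1 q'.2‖ + ‖b q.1 q.2 - b q'.1 q'.2‖ ≤ L * (‖q.1 - q'.1‖ + ‖q.2 - q'.2‖))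
    {q₀ : E × E} (hq₀ : q₀.2 ≠ 0) : ContinuousAt ↿a q₀ ∧ ContinuousAt ↿b q₀ := by
  set r := ‖q₀.2‖ / 2 with hr_def
  have hr : 0 < r := by positivity
  have hK : ∀ q ∈ closedBall q₀ r, q.2 ≠ 0 := by
    intro q hq hq0
    have := (norm_snd_le (q - q₀)).trans (mem_closedBall_iff_norm.mp hq)
    rw [Prod.snd_sub, hq0, zero_sub, norm_neg] at this
    linarith [norm_pos_iff.mpr hq₀]
  obtain ⟨L, hL⟩ := hab _ (isCompact_closedBall q₀ r) hK
  have hLq : ∀ᶠ q in 𝓝 q₀, ‖a q.1 q.2 - a q₀.1 q₀.2‖ + ‖b q.1 q.2 - b q₀.1 q₀.2‖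
      ≤ L * (‖q.1 - q₀.1‖ + ‖q.2 - q₀.2‖) := by
    filter_upwards [closedBall_mem_nhds q₀ hr] with q hq
    exact hL q hq q₀ (mem_closedBall_self hr.le)
  constructor <;> refine continuousAt_of_norm_sub_le (L := L) ?_ <;>
    filter_upwards [hLq] with q hq
  · exact (le_add_of_nonneg_right (norm_nonneg _)).trans hq
  · exact (le_add_of_nonneg_left (norm_nonneg _)).trans hq

end Continuity

section StrictDeriv

variable {E : Type*} [NormedAddCommGroup E] [InnerProductSpace ℝ E] [CompleteSpace E]

theorem hasStrictFDerivAt_uncurry_of_hasGradientAt {H : E → E → ℝ} {a b : E → E → E}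
    {q₀ : E × E} (ha : ∀ᶠ q in 𝓝 q₀, HasGradientAt (H · q.2) (a q.1 q.2) q.1)
    (hb : ∀ᶠ q in 𝓝 q₀, HasGradientAt (H q.1 ·) (b q.1 q.2) q.2)
    (hca : ContinuousAt ↿a q₀) (hcb : ContinuousAt ↿b q₀) :
    HasStrictFDerivAt ↿H ((toDual ℝ E (a q₀.1 q₀.2)).coprod (toDual ℝ E (b q₀.1 q₀.2))) q₀ :=
  hasStrictFDerivAt_uncurry_coprod (f₁ := fun x p => toDual ℝ E (a x p))
    (f₂ := fun x p => toDual ℝ E (b x p)) (ha.mono fun _ h => h.hasFDerivAt)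
    (hb.mono fun _ h => h.hasFDerivAt) ((toDual ℝ E).continuous.continuousAt.comp hca)
    ((toDual ℝ E).continuous.continuousAt.comp hcb)

theorem HasStrictFDerivAt.comp_neg_gradient {H : E → E → ℝ} {g : E → ℝ} {x a b : E}
    (hH : HasStrictFDerivAt ↿H ((toDual ℝ E a).coprod (toDual ℝ E b)) (x, -∇ g x))
    (hg : ContDiffAt ℝ 2 g x) :
    HasStrictFDerivAt (fun y => H y (-∇ g y)) (toDual ℝ E (a - fderiv ℝ (∇ g) x b)) x := by
  have hgrad : HasStrictFDerivAt (∇ g) (fderiv ℝ (∇ g) x) x :=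
    (hg.gradient (m := 1) (by norm_num)).hasStrictFDerivAt one_ne_zero
  have hD : ((toDual ℝ E a).coprod (toDual ℝ E b)).comp
      ((ContinuousLinearMap.id ℝ E).prod (-fderiv ℝ (∇ g) x))
      = toDual ℝ E (a - fderiv ℝ (∇ g) x b) := by
    ext v
    simp only [ContinuousLinearMap.comp_apply, ContinuousLinearMap.prod_apply,
      ContinuousLinearMap.coprod_apply, ContinuousLinearMap.coe_id', id_eq, neg_apply,
      toDual_apply_apply, inner_sub_left, inner_neg_right]
    rw [inner_fderiv_gradient_comm hg, real_inner_comm b, sub_eq_add_neg]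
  exact hD ▸ hH.comp x ((hasStrictFDerivAt_id x).prodMk hgrad.neg)

end StrictDeriv

section ProximalNormal

variable {n : ℕ} {x : En n}

theorem inner_nonpos_of_mem_proxNormal {A : Set (En n)} {ξ w : En n} (hξ : ξ ∈ proxNormal A x)
    (hw : ∀ᶠ t in 𝓝[>] (0 : ℝ), x + t • w ∈ A) : ⟪ξ, w⟫_ℝ ≤ 0 := by
  obtain ⟨σ, -, hσ⟩ := hξ
  have hlim : Tendsto (fun t : ℝ => σ * t * ‖w‖ ^ 2) (𝓝[>] 0) (𝓝 0) :=
    tendsto_nhdsWithin_of_tendsto_nhds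
      ((by fun_prop : Continuous fun t : ℝ => σ * t * ‖w‖ ^ 2).tendsto' 0 0 (by simp))
  refine ge_of_tendsto hlim ?_
  filter_upwards [hw, self_mem_nhdsWithin] with t hxt (ht : 0 < t)
  have h := hσ _ hxt
  rw [add_sub_cancel_left, real_inner_smul_right, norm_smul, mul_pow, Real.norm_eq_abs,
    sq_abs] at h
  exact le_of_mul_le_mul_left (by linarith) ht

theorem exists_nonpos_eq_smul_of_mem_proxNormal {g : En n → ℝ} {A : Set (En n)} {u ξ : En n}
    (hg : HasGradientAt g u x) (hu : u ≠ 0) (hx : g x = 0) (hA : {y | 0 < g y} ⊆ A)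
    (hξ : ξ ∈ proxNormal A x) : ∃ c : ℝ, c ≤ 0 ∧ ξ = c • u :=
  exists_nonpos_eq_smul_of_inner_nonpos hu fun _ hw =>
    inner_nonpos_of_mem_proxNormal hξ ((hg.eventually_pos_of_inner_pos hx hw).mono fun _ h => hA h)

end ProximalNormal

section Hamiltonian

variable {n : ℕ} {F : En n → Set (En n)} {x : En n}

-- `Real.sSup_nonneg'` also covers an image unbounded above, whose `sSup` is the junk value `0`.
theorem Ham_nonneg (h0 : (0 : En n) ∈ F x) (p : En n) : 0 ≤ Ham F x p :=
  Real.sSup_nonneg' ⟨0, ⟨0, h0, inner_zero_right _⟩, le_rfl⟩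

theorem Ham_smul {t : ℝ} (ht : 0 ≤ t) (p : En n) : Ham F x (t • p) = t * Ham F x p := by
  have himage : (fun v => ⟪t • p, v⟫_ℝ) '' F x = t • (fun v => ⟪p, v⟫_ℝ) '' F x := by
    rw [← Set.image_smul, Set.image_image]
    simp only [smul_eq_mul, real_inner_smul_left]
  rw [Ham, Ham, himage, Real.sSup_smul_of_nonneg ht, smul_eq_mul]

theorem Ham_smul_eq_zero_iff {t : ℝ} (ht : 0 < t) (p : En n) :
    Ham F x (t • p) = 0 ↔ Ham F x p = 0 := by
  rw [Ham_smul ht.le, mul_eq_zero, or_iff_right ht.ne']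

theorem isLocalMinOn_Ham_neg_gradient {g : En n → ℝ} (hg : ContDiff ℝ 1 g)
    (h0F : ∀ y ∈ frontier {y | g y ≤ 0}, (0 : En n) ∈ F y) (hx : g x = 0) (hu : ∇ g x ≠ 0)
    (hH : Ham F x (-∇ g x) = 0) : IsLocalMinOn (fun y => Ham F y (-∇ g y)) {y | g y = g x} x := by
  have hne : ∀ᶠ y in 𝓝 x, ∇ g y ≠ 0 :=
    (hg.contDiffAt.gradient (m := 0) (by norm_num)).continuousAt.eventually_ne hu
  rw [IsLocalMinOn, IsMinFilter, eventually_nhdsWithin_iff]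
  filter_upwards [hne] with y hy (hgy : g y = g x)
  rw [hH]
  have hy_frontier : y ∈ frontier {y | g y ≤ 0} :=
    mem_frontier_setOf_nonpos (hg.differentiable one_ne_zero y).hasGradientAt hy (hgy.trans hx)
  exact Ham_nonneg (h0F y hy_frontier) _

end Hamiltonian

theorem vanishing_hamiltonian_normal_in_sigma_general {n : ℕ}
    (F : En n → Set (En n))
    (gradp gradx : En n → En n → En n)
    (g : En n → ℝ) (hg2 : ContDiff ℝ 2 g)
    (S : Set (En n)) (hgS : S = {x : En n | g x ≤ 0})
    (Sg : Set (En n))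
    (hgne : ∀ x ∈ frontier S, ∇ g x ≠ 0)
    (h0F : ∀ x ∈ frontier S, (0 : En n) ∈ F x)
    -- `H` is of class `C^{1,1}` on `ℝⁿ × (ℝⁿ ∖ {0})`:
    (hgradp : ∀ x p : En n, p ≠ 0 → HasGradientAt (fun q => Ham F x q) (gradp x p) p)
    (hgradx : ∀ x p : En n, p ≠ 0 → HasGradientAt (fun y => Ham F y p) (gradx x p) x)
    (hC11 : ∀ Kc : Set (En n × En n), IsCompact Kc → (∀ q ∈ Kc, q.2 ≠ 0) →
      ∃ L : ℝ, ∀ a ∈ Kc, ∀ b ∈ Kc,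
        ‖gradx a.1 a.2 - gradx b.1 b.2‖ + ‖gradp a.1 a.2 - gradp b.1 b.2‖
          ≤ L * (‖a.1 - b.1‖ + ‖a.2 - b.2‖))
    -- condition (d):
    (hd : ∀ x ∈ frontier S \ Sg, ∀ l : ℝ,
      gradx x (-(∇ g x)) - fderiv ℝ (fun y => ∇ g y) x (gradp x (-(∇ g x)))
        ≠ l • ∇ g x) :
    ∀ xb ∈ frontier S, ∀ ξ : En n, ξ ≠ 0 →
      ξ ∈ proxNormal (closure Sᶜ) xb → Ham F xb ξ = 0 → xb ∈ Sg := by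
  subst hgS
  intro xb hxb ξ hξ hprox hH0
  by_contra hxSg
  have hg1 : ContDiff ℝ 1 g := hg2.of_le one_le_two
  have hgxb : g xb = 0 := frontier_le_subset_eq hg2.continuous continuous_const hxb
  have hu : ∇ g xb ≠ 0 := hgne xb hxb
  obtain ⟨c, hc, rfl⟩ := exists_nonpos_eq_smul_of_mem_proxNormal
    (hg1.differentiable one_ne_zero xb).hasGradientAt hu hgxb
    (fun y (hy : 0 < g y) => subset_closure hy.not_ge) hprox
  have hc0 : c < 0 := hc.lt_of_ne (by rintro rfl; exact hξ (zero_smul _ _))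
  have hHxb : Ham F xb (-∇ g xb) = 0 := by
    rwa [← Ham_smul_eq_zero_iff (neg_pos.mpr hc0), neg_smul_neg]
  have hp : (xb, -∇ g xb).2 ≠ 0 := neg_ne_zero.mpr hu
  have hp_near : ∀ᶠ q in 𝓝 (xb, -∇ g xb), q.2 ≠ 0 := continuous_snd.continuousAt.eventually_ne hp
  obtain ⟨hcx, hcp⟩ := continuousAt_uncurry_of_lipschitz_on_compact_away_zero hC11 hp
  have hHam := hasStrictFDerivAt_uncurry_of_hasGradientAt (H := Ham F)
    (hp_near.mono fun q hq => hgradx q.1 q.2 hq) (hp_near.mono fun q hq => hgradp q.1 q.2 hq)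
    hcx hcp
  have hmin := isLocalMinOn_Ham_neg_gradient hg1 h0F hgxb hu hHxb
  obtain ⟨l, hl⟩ := IsLocalExtrOn.exists_eq_smul_of_hasStrictFDerivAt (Or.inl hmin)
    hg1.contDiffAt.hasStrictFDerivAt_gradient (hHam.comp_neg_gradient hg2.contDiffAt) hu
  exact hd xb ⟨hxb, hxSg⟩ l hl

/-- Let `g ∈ C²_b(ℝⁿ)` with `∇g ≠ 0` on `∂𝒮`, `𝒮 = {g ≤ 0}`, `Σ ⊆ ∂𝒮`.
Let `F` satisfy (F) with `0 ∈ F(x)` on `∂𝒮`, let `H` be `C^{1,1}` on `ℝⁿ×(ℝⁿ∖{0})`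
(gradients `gradx`, `gradp`), and assume that for all `x ∈ ∂𝒮∖Σ` and `λ ∈ ℝ`,
`∇ₓH(x,−∇g(x)) − ∇ₚH(x,−∇g(x))·∇²g(x) ≠ λ∇g(x)`. Then: if `x̄ ∈ ∂𝒮` admits a nonzero
proximal normal `ξ` to `cl(ℝⁿ∖𝒮)` with `H(x̄,ξ) = 0`, then `x̄ ∈ Σ`. -/
theorem vanishing_hamiltonian_normal_in_sigma {n : ℕ}
    (F : En n → Set (En n)) (K : ℝ) (hF : HypF F K)
    (gradp gradx : En n → En n → En n)
    (g : En n → ℝ) (hg2 : ContDiff ℝ 2 g)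
    (hgb : ∃ C : ℝ, ∀ x : En n, ‖iteratedFDeriv ℝ 2 g x‖ ≤ C)
    (S : Set (En n)) (hgS : S = {x : En n | g x ≤ 0})
    (Sg : Set (En n)) (hSg : Sg ⊆ frontier S)
    (hgne : ∀ x ∈ frontier S, ∇ g x ≠ 0)
    (h0F : ∀ x ∈ frontier S, (0 : En n) ∈ F x)
    -- `H` is of class `C^{1,1}` on `ℝⁿ × (ℝⁿ ∖ {0})`:
    (hgradp : ∀ x p : En n, p ≠ 0 → HasGradientAt (fun q => Ham F x q) (gradp x p) p)
    (hgradx : ∀ x p : En n, p ≠ 0 → HasGradientAt (fun y => Ham F y p) (gradx x p) x)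
    (hC11 : ∀ Kc : Set (En n × En n), IsCompact Kc → (∀ q ∈ Kc, q.2 ≠ 0) →
      ∃ L : ℝ, ∀ a ∈ Kc, ∀ b ∈ Kc,
        ‖gradx a.1 a.2 - gradx b.1 b.2‖ + ‖gradp a.1 a.2 - gradp b.1 b.2‖
          ≤ L * (‖a.1 - b.1‖ + ‖a.2 - b.2‖))
    -- condition (d):
    (hd : ∀ x ∈ frontier S \ Sg, ∀ l : ℝ,
      gradx x (-(∇ g x)) - fderiv ℝ (fun y => ∇ g y) x (gradp x (-(∇ g x)))
        ≠ l • ∇ g x) :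
    ∀ xb ∈ frontier S, ∀ ξ : En n, ξ ≠ 0 →
      ξ ∈ proxNormal (closure Sᶜ) xb → Ham F xb ξ = 0 → xb ∈ Sg :=
  vanishing_hamiltonian_normal_in_sigma_general F gradp gradx g hg2 S hgS Sg hgne h0F hgradp hgradx
    hC11 hd
end
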